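/- arXiv:1405.2009 — 3 statements merged into one kernel-verified Lean document; each statement's English description precedes it below -/
import Mathlib

section
/- Let R be a local topological ring such that the unit group R^× is open in R and is a topological group under the subspace topology. Suppose T₁ and T₂ are two assignments of a topology to the set X(R) of R-points of every locally of finite type R-scheme X, each satisfying: (ii) for every n ≥ 0 the canonical bijection 𝔸ⁿ(R) = Rⁿ is a homeomorphism; (iii) every closed immersion X ↪ X′ induces a topological embedding X(R) ↪ X′(R); (iv) every open immersion X ↪ X′ induces an open topological embedding X(R) ↪ X′(R). Then T₁ = T₂, i.e., for every locally of finite type R-scheme X the two topologies on X(R) coincide. -/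
/-!
STATEMENT 0: Uniqueness of the topologization of rational points.
If two assignments of topologies to `X(R)`, for locally of finite type `R`-schemes `X`,
both satisfy (ii) `𝔸ⁿ(R) = Rⁿ` is a homeomorphism, (iii) closed immersions induce
topological embeddings, and (iv) open immersions induce open topological embeddings,
then the two assignments coincide.
-/

open AlgebraicGeometry CategoryTheory CategoryTheory.Limits Topology

noncomputable section

/-- `Spec R`, as a scheme, for a commutative ring `R`. -/
abbrev SpecR (R : Type) [CommRing R] : Scheme := Spec (CommRingCat.of R)

/-- The set of `R`-points of a scheme `X` over `Spec R` with structure morphism `f`,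
i.e. the set of sections of `f`. -/
def Pts {R : Type} [CommRing R] {X : Scheme} (f : X ⟶ SpecR R) : Type :=
  { s : SpecR R ⟶ X // s ≫ f = 𝟙 (SpecR R) }

/-- The map on `R`-points induced by a morphism `g` of schemes over `Spec R`. -/
def Pts.map {R : Type} [CommRing R] {X X' : Scheme} {f : X ⟶ SpecR R} {f' : X' ⟶ SpecR R}
    (g : X ⟶ X') (w : g ≫ f' = f) (s : Pts f) : Pts f' :=
  ⟨s.1 ≫ g, by rw [Category.assoc, w, s.2]⟩

/-- Affine `n`-space over `R`. -/
abbrev AffineN (R : Type) [CommRing R] (n : ℕ) : Scheme :=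
  Spec (CommRingCat.of (MvPolynomial (Fin n) R))

/-- The structure morphism of affine `n`-space over `R`. -/
def AffineNStr (R : Type) [CommRing R] (n : ℕ) : AffineN R n ⟶ SpecR R :=
  Spec.map (CommRingCat.ofHom (algebraMap R (MvPolynomial (Fin n) R)))

/-- The canonical identification `𝔸ⁿ(R) = Rⁿ`, sending a section to its coordinates. -/
def affineCoords (R : Type) [CommRing R] (n : ℕ) (s : Pts (AffineNStr R n)) : Fin n → R :=
  fun i => Spec.preimage s.1 (MvPolynomial.X i)

/-- An assignment of topologies to sets of rational points over `R`, satisfying only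
the axioms (ii), (iii) and (iv). -/
structure WeakPointsTopology (R : Type) [CommRing R] [TopologicalSpace R] : Type 1 where
  /-- the topology on `X(R)` -/
  top : ∀ {X : Scheme} (f : X ⟶ SpecR R), LocallyOfFiniteType f → TopologicalSpace (Pts f)
  /-- (ii) the canonical bijection `𝔸ⁿ(R) = Rⁿ` is a homeomorphism -/
  affine_homeo : ∀ (n : ℕ) (h : LocallyOfFiniteType (AffineNStr R n)),
      letI := top (AffineNStr R n) h
      IsHomeomorph (affineCoords R n)
  /-- (iii) closed immersions induce topological embeddings on `R`-points -/
  closedImmersion_isEmbedding : ∀ {X X' : Scheme} {f : X ⟶ SpecR R} {f' : X' ⟶ SpecR R}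
      (hf : LocallyOfFiniteType f) (hf' : LocallyOfFiniteType f') (g : X ⟶ X')
      (w : g ≫ f' = f), IsClosedImmersion g →
      letI := top f hf
      letI := top f' hf'
      IsEmbedding (Pts.map g w)
  /-- (iv) open immersions induce open topological embeddings on `R`-points -/
  openImmersion_isOpenEmbedding : ∀ {X X' : Scheme} {f : X ⟶ SpecR R} {f' : X' ⟶ SpecR R}
      (hf : LocallyOfFiniteType f) (hf' : LocallyOfFiniteType f') (g : X ⟶ X')
      (w : g ≫ f' = f), IsOpenImmersion g →
      letI := top f hf
      letI := top f' hf'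
      IsOpenEmbedding (Pts.map g w)


/-!
On `𝔸ⁿ(R) = Rⁿ` both topologies are the product topology by (ii). An affine `R`-scheme of
finite type is a closed subscheme of some `𝔸ⁿ`, so by (iii) both topologies on its `R`-points
are induced from `Rⁿ` along the same map. For general `X`, a section `s` of `X → Spec R` sends
every point of the local scheme `Spec R` to a generization of the image of the closed point;
hence `s` factors through any affine open containing that image, and (iv) identifies the
neighbourhoods of `s` in `X(R)` with those of its lift in the affine open, for either topology.
-/

lemma locallyOfFiniteType_affineNStr (R : Type) [CommRing R] (n : ℕ) :
    LocallyOfFiniteType (AffineNStr R n) :=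
  HasRingHomProperty.Spec_iff.mpr (RingHom.finiteType_algebraMap.mpr inferInstance)

lemma exists_isClosedImmersion_affineN {R : Type} [CommRing R] {S : CommRingCat}
    (f : Spec S ⟶ SpecR R) [LocallyOfFiniteType f] :
    ∃ (n : ℕ) (g : Spec S ⟶ AffineN R n), IsClosedImmersion g ∧ g ≫ AffineNStr R n = f := by
  have hft : RingHom.FiniteType (Spec.preimage f).hom := by
    rw [← HasRingHomProperty.Spec_iff (P := @LocallyOfFiniteType), Spec.map_preimage]
    infer_instance
  let _ : Algebra R S := (Spec.preimage f).hom.toAlgebra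
  obtain ⟨n, ψ, hψ⟩ := Algebra.FiniteType.iff_quotient_mvPolynomial''.mp hft
  refine ⟨n, Spec.map (CommRingCat.ofHom ψ.toRingHom),
    IsClosedImmersion.spec_of_surjective _ hψ, ?_⟩
  refine ((Spec.map_comp _ _).symm.trans ?_).trans (Spec.map_preimage f)
  exact congrArg Spec.map (CommRingCat.hom_ext (AlgHom.comp_algebraMap ψ))

lemma Pts.exists_map_eq_of_isOpenImmersion {R : Type} [CommRing R] [IsLocalRing R]
    {X U : Scheme} {f : X ⟶ SpecR R} (s : Pts f) (ι : U ⟶ X) [IsOpenImmersion ι]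
    (hs : s.1.base (IsLocalRing.closedPoint R) ∈ Set.range ι.base) :
    ∃ s₀ : Pts (ι ≫ f), Pts.map ι rfl s₀ = s := by
  have hrange : Set.range s.1.base ⊆ Set.range ι.base := by
    rintro _ ⟨y, rfl⟩
    exact ((IsLocalRing.specializes_closedPoint y).map s.1.base.hom.2).mem_open
      ι.isOpenEmbedding.isOpen_range hs
  have hlift := IsOpenImmersion.lift_fac ι s.1 hrange
  exact ⟨⟨IsOpenImmersion.lift ι s.1 hrange, by rw [← Category.assoc, hlift, s.2]⟩,
    Subtype.ext hlift⟩

namespace WeakPointsTopology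

variable {R : Type} [CommRing R] [TopologicalSpace R] (T : WeakPointsTopology R)

lemma top_affineN_eq_induced (n : ℕ) (h : LocallyOfFiniteType (AffineNStr R n)) :
    T.top (AffineNStr R n) h = .induced (affineCoords R n) inferInstance :=
  letI := T.top (AffineNStr R n) h
  (T.affine_homeo n h).isInducing.eq_induced

lemma top_eq_induced_of_isClosedImmersion {X X' : Scheme} {f : X ⟶ SpecR R}
    {f' : X' ⟶ SpecR R} (hf : LocallyOfFiniteType f) (hf' : LocallyOfFiniteType f')
    (g : X ⟶ X') (w : g ≫ f' = f) [IsClosedImmersion g] :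
    T.top f hf = .induced (Pts.map g w) (T.top f' hf') :=
  letI := T.top f hf
  letI := T.top f' hf'
  (T.closedImmersion_isEmbedding hf hf' g w inferInstance).eq_induced

lemma map_nhds_eq_of_isOpenImmersion {X X' : Scheme} {f : X ⟶ SpecR R}
    {f' : X' ⟶ SpecR R} (hf : LocallyOfFiniteType f) (hf' : LocallyOfFiniteType f')
    (g : X ⟶ X') (w : g ≫ f' = f) [IsOpenImmersion g] (s : Pts f) :
    Filter.map (Pts.map g w) (@nhds _ (T.top f hf) s) =
      @nhds _ (T.top f' hf') (Pts.map g w s) :=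
  letI := T.top f hf
  letI := T.top f' hf'
  (T.openImmersion_isOpenEmbedding hf hf' g w inferInstance).map_nhds_eq s

lemma top_eq_of_affine (T₁ T₂ : WeakPointsTopology R) {S : CommRingCat}
    (f : Spec S ⟶ SpecR R) (hf : LocallyOfFiniteType f) :
    T₁.top f hf = T₂.top f hf := by
  obtain ⟨n, g, hg, w⟩ := exists_isClosedImmersion_affineN f
  have hAn := locallyOfFiniteType_affineNStr R n
  rw [T₁.top_eq_induced_of_isClosedImmersion hf hAn g w,
    T₂.top_eq_induced_of_isClosedImmersion hf hAn g w,
    T₁.top_affineN_eq_induced, T₂.top_affineN_eq_induced]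

end WeakPointsTopology

theorem statement_0_general (R : Type) [CommRing R] [TopologicalSpace R]
    [IsLocalRing R]
    (T₁ T₂ : WeakPointsTopology R) :
    ∀ {X : Scheme} (f : X ⟶ SpecR R) (hf : LocallyOfFiniteType f),
      T₁.top f hf = T₂.top f hf := by
  intro X f hf
  refine TopologicalSpace.ext_nhds fun s => ?_
  let x := s.1.base (IsLocalRing.closedPoint R)
  let ι := X.affineCover.f (X.affineCover.idx x)
  obtain ⟨s₀, hs₀⟩ := s.exists_map_eq_of_isOpenImmersion ι (X.affineCover.covers x)
  have hfU : LocallyOfFiniteType (ι ≫ f) := inferInstance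
  have h_affine : T₁.top (ι ≫ f) hfU = T₂.top (ι ≫ f) hfU :=
    WeakPointsTopology.top_eq_of_affine T₁ T₂ _ hfU
  rw [← hs₀, ← T₁.map_nhds_eq_of_isOpenImmersion hfU hf,
    ← T₂.map_nhds_eq_of_isOpenImmersion hfU hf, h_affine]

/-- Any two assignments of topologies to the sets of `R`-points of locally of finite type
`R`-schemes, each satisfying (ii), (iii) and (iv), coincide. -/
theorem statement_0 (R : Type) [CommRing R] [TopologicalSpace R] [IsTopologicalRing R]
    [IsLocalRing R]
    (hunit : IsOpen {x : R | IsUnit x})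
    (hinv : ContinuousOn (fun x : R => Ring.inverse x) {x : R | IsUnit x})
    (T₁ T₂ : WeakPointsTopology R) :
    ∀ {X : Scheme} (f : X ⟶ SpecR R) (hf : LocallyOfFiniteType f),
      T₁.top f hf = T₂.top f hf :=
  statement_0_general R T₁ T₂

end
end

section
/- Let R be a local topological ring in which R^× is open and is a topological group in its subspace topology, and fix a topologization of rational points over R. If R is finite-closed, then R is Hausdorff as a topological space. -/
open AlgebraicGeometry CategoryTheory CategoryTheory.Limits Topology

noncomputable section

/-- A topologization of rational points over `R`: an assignment of a topology to `X(R)`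
for every locally of finite type `R`-scheme `X`, satisfying (i)–(iv). -/
structure PointsTopology (R : Type) [CommRing R] [TopologicalSpace R] : Type 1 where
  /-- the topology on `X(R)` -/
  top : ∀ {X : Scheme} (f : X ⟶ SpecR R), LocallyOfFiniteType f → TopologicalSpace (Pts f)
  /-- (i) every `R`-morphism induces a continuous map on `R`-points -/
  continuous_map : ∀ {X X' : Scheme} {f : X ⟶ SpecR R} {f' : X' ⟶ SpecR R}
      (hf : LocallyOfFiniteType f) (hf' : LocallyOfFiniteType f') (g : X ⟶ X') (w : g ≫ f' = f),
      letI := top f hf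
      letI := top f' hf'
      Continuous (Pts.map g w)
  /-- (ii) the canonical bijection `𝔸ⁿ(R) = Rⁿ` is a homeomorphism -/
  affine_homeo : ∀ (n : ℕ) (h : LocallyOfFiniteType (AffineNStr R n)),
      letI := top (AffineNStr R n) h
      IsHomeomorph (affineCoords R n)
  /-- (iii) closed immersions induce topological embeddings on `R`-points -/
  closedImmersion_isEmbedding : ∀ {X X' : Scheme} {f : X ⟶ SpecR R} {f' : X' ⟶ SpecR R}
      (hf : LocallyOfFiniteType f) (hf' : LocallyOfFiniteType f') (g : X ⟶ X')
      (w : g ≫ f' = f), IsClosedImmersion g →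
      letI := top f hf
      letI := top f' hf'
      IsEmbedding (Pts.map g w)
  /-- (iv) open immersions induce open topological embeddings on `R`-points -/
  openImmersion_isOpenEmbedding : ∀ {X X' : Scheme} {f : X ⟶ SpecR R} {f' : X' ⟶ SpecR R}
      (hf : LocallyOfFiniteType f) (hf' : LocallyOfFiniteType f') (g : X ⟶ X')
      (w : g ≫ f' = f), IsOpenImmersion g →
      letI := top f hf
      letI := top f' hf'
      IsOpenEmbedding (Pts.map g w)

/-- `R` is étale-open: étale morphisms of locally of finite type `R`-schemes
induce open maps on `R`-points. -/
def EtaleOpen {R : Type} [CommRing R] [TopologicalSpace R] (T : PointsTopology R) : Prop :=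
  ∀ {X Y : Scheme} {f : X ⟶ SpecR R} {g : Y ⟶ SpecR R}
    (hf : LocallyOfFiniteType f) (hg : LocallyOfFiniteType g) (φ : X ⟶ Y) (w : φ ≫ g = f),
    IsEtale φ →
    letI := T.top f hf
    letI := T.top g hg
    IsOpenMap (Pts.map φ w)

/-- `R` is proper-closed: proper morphisms of locally of finite type `R`-schemes
induce closed maps on `R`-points. -/
def ProperClosed {R : Type} [CommRing R] [TopologicalSpace R] (T : PointsTopology R) : Prop :=
  ∀ {X Y : Scheme} {f : X ⟶ SpecR R} {g : Y ⟶ SpecR R}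
    (hf : LocallyOfFiniteType f) (hg : LocallyOfFiniteType g) (φ : X ⟶ Y) (w : φ ≫ g = f),
    IsProper φ →
    letI := T.top f hf
    letI := T.top g hg
    IsClosedMap (Pts.map φ w)

/-- `R` is finite-closed: finite morphisms of locally of finite type `R`-schemes
induce closed maps on `R`-points. -/
def FiniteClosed {R : Type} [CommRing R] [TopologicalSpace R] (T : PointsTopology R) : Prop :=
  ∀ {X Y : Scheme} {f : X ⟶ SpecR R} {g : Y ⟶ SpecR R}
    (hf : LocallyOfFiniteType f) (hg : LocallyOfFiniteType g) (φ : X ⟶ Y) (w : φ ≫ g = f),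
    IsFinite φ →
    letI := T.top f hf
    letI := T.top g hg
    IsClosedMap (Pts.map φ w)


namespace AffineN

def map (R : Type) [CommRing R] {m n : ℕ} (σ : Fin n → Fin m) : AffineN R m ⟶ AffineN R n :=
  Spec.map (CommRingCat.ofHom (MvPolynomial.rename (R := R) σ).toRingHom)

variable {R : Type} [CommRing R] {m n : ℕ}

lemma map_comp_affineNStr (σ : Fin n → Fin m) :
    map R σ ≫ AffineNStr R n = AffineNStr R m := by
  rw [map, AffineNStr, AffineNStr, ← Spec.map_comp]
  exact congrArg Spec.map (CommRingCat.hom_ext (RingHom.ext (MvPolynomial.rename σ).commutes))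

lemma isClosedImmersion_map {σ : Fin n → Fin m} (hσ : Function.Surjective σ) :
    IsClosedImmersion (map R σ) :=
  IsClosedImmersion.spec_of_surjective _ (MvPolynomial.rename_surjective σ hσ)

lemma affineCoords_ptsMap (σ : Fin n → Fin m) (s : Pts (AffineNStr R m)) :
    affineCoords R n (Pts.map (map R σ) (map_comp_affineNStr σ) s) = affineCoords R m s ∘ σ := by
  funext i
  change Spec.preimage (s.1 ≫ map R σ) _ = _
  rw [map, Spec.preimage_comp, Spec.preimage_map]
  exact congrArg (Spec.preimage s.1) (MvPolynomial.rename_X σ i)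

end AffineN

lemma FiniteClosed.isClosed_range_comp {R : Type} [CommRing R] [TopologicalSpace R]
    {T : PointsTopology R} (hT : FiniteClosed T) {m n : ℕ} {σ : Fin n → Fin m}
    (hσ : Function.Surjective σ) :
    IsClosed (Set.range fun x : Fin m → R => x ∘ σ) := by
  have hm := locallyOfFiniteType_affineNStr R m
  have hn := locallyOfFiniteType_affineNStr R n
  let := T.top _ hm
  let := T.top _ hn
  have hfinite : IsFinite (AffineN.map R σ) := by
    have := AffineN.isClosedImmersion_map (R := R) hσ
    infer_instance
  have hclosed := hT hm hn _ (AffineN.map_comp_affineNStr σ) hfinite _ isClosed_univ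
  have hrange : Set.range (fun x : Fin m → R => x ∘ σ) =
      affineCoords R n '' (Pts.map (AffineN.map R σ) (AffineN.map_comp_affineNStr σ) '' .univ) := by
    rw [Set.image_univ, ← Set.range_comp, ← (T.affine_homeo m hm).surjective.range_comp]
    exact congrArg Set.range (funext fun s => (AffineN.affineCoords_ptsMap σ s).symm)
  rw [hrange]
  exact (T.affine_homeo n hn).isClosedMap _ hclosed

theorem statement_16_general (R : Type) [CommRing R] [TopologicalSpace R]
    (T : PointsTopology R) (hT : FiniteClosed T) :
    T2Space R := by
  have hdiag : IsClosed (Set.range fun x : Fin 1 → R => x ∘ fun _ : Fin 2 => 0) :=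
    hT.isClosed_range_comp fun _ => ⟨0, Subsingleton.elim _ _⟩
  rw [t2_iff_isClosed_diagonal]
  convert hdiag.preimage (Homeomorph.finTwoArrow (X := R)).symm.continuous
  ext ⟨a, b⟩
  constructor
  · rintro (rfl : a = b)
    exact ⟨fun _ => a, funext fun i => by fin_cases i <;> rfl⟩
  · rintro ⟨x, hx⟩
    exact (congrFun hx 0).symm.trans (congrFun hx 1)

/-- a local topological ring `R` with `R^×` open and a topological group in
the subspace topology, equipped with a topologization of rational points, is Hausdorff
whenever it is finite-closed. -/
theorem statement_16 (R : Type) [CommRing R] [TopologicalSpace R] [IsTopologicalRing R]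
    [IsLocalRing R]
    (hunit : IsOpen {x : R | IsUnit x})
    (hinv : ContinuousOn (fun x : R => Ring.inverse x) {x : R | IsUnit x})
    (T : PointsTopology R) (hT : FiniteClosed T) :
    T2Space R :=
  statement_16_general R T hT

end
end

section
/- Let R be a local topological ring in which R^× is open and is a topological group in its subspace topology, and fix a topologization of rational points over R. If for every étale morphism f : X → Y between affine finite type R-schemes the induced map f(R) : X(R) → Y(R) is open, then R is étale-open: for every étale morphism f : X → Y of locally of finite type R-schemes, f(R) is open. -/
/-! Openness of a map is local on the source, so it suffices to check `φ(R)` near each section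
`s`. As `R` is local, every point of `Spec R` specializes to the closed point, so `s` factors
through any open subscheme containing the image of the closed point. Choosing affine opens `U` of
`X` containing that image and `V` of `Y` with `φ(U) ⊆ V`, the section `s` lifts to `U(R)` and `φ`
restricts to an étale morphism `U → V` of affine schemes, whose map on `R`-points is open by
hypothesis. Since `U(R) → X(R)` is continuous and `V(R) → Y(R)` is an open embedding, `φ(R)` is
open at `s`. -/

open AlgebraicGeometry CategoryTheory CategoryTheory.Limits Topology

noncomputable section

section LocalCriterion

variable {A A' B B' : Type*} [TopologicalSpace A] [TopologicalSpace A'] [TopologicalSpace B]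
  [TopologicalSpace B']

theorem nhds_le_map_nhds_of_comp_eq {F : A → B} {i : A' → A} {j : B' → B} {m : A' → B'}
    (hi : Continuous i) (hj : IsOpenMap j) (hm : IsOpenMap m) (hcomm : j ∘ m = F ∘ i) (a : A') :
    𝓝 (F (i a)) ≤ (𝓝 (i a)).map F :=
  calc 𝓝 (F (i a)) = 𝓝 ((j ∘ m) a) := by rw [hcomm]; rfl
    _ ≤ (𝓝 a).map (j ∘ m) := (hj.comp hm).nhds_le a
    _ = ((𝓝 a).map i).map F := by rw [hcomm, Filter.map_map]
    _ ≤ (𝓝 (i a)).map F := Filter.map_mono hi.continuousAt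

end LocalCriterion

lemma AlgebraicGeometry.Scheme.Hom.range_subset_of_closedPoint_mem {R : Type*} [CommRing R]
    [IsLocalRing R] {X : Scheme} (s : Spec (CommRingCat.of R) ⟶ X) {U : Set X} (hU : IsOpen U)
    (h : s (IsLocalRing.closedPoint R) ∈ U) : Set.range s ⊆ U := by
  rintro _ ⟨x, rfl⟩
  exact ((IsLocalRing.specializes_closedPoint x).map s.continuous).mem_open hU h

lemma AlgebraicGeometry.Scheme.Hom.exists_isAffineOpen_mem_le_preimage {X Y : Scheme}
    (φ : X ⟶ Y) (x : X) :
    ∃ (U : X.Opens) (V : Y.Opens), IsAffineOpen U ∧ IsAffineOpen V ∧ x ∈ U ∧ U ≤ φ ⁻¹ᵁ V := by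
  obtain ⟨V, hV, hxV, -⟩ :=
    exists_isAffineOpen_mem_and_subset (TopologicalSpace.Opens.mem_top (φ x))
  obtain ⟨U, hU, hxU, hUV⟩ := exists_isAffineOpen_mem_and_subset (U := φ ⁻¹ᵁ V) hxV
  exact ⟨U, V, hU, hV, hxU, hUV⟩

namespace Pts

variable {R : Type} [CommRing R]

lemma map_comp_map_of_comp_eq {X₁ X₂ X₃ X₄ : Scheme} {f₁ : X₁ ⟶ SpecR R} {f₂ : X₂ ⟶ SpecR R}
    {f₃ : X₃ ⟶ SpecR R} {f₄ : X₄ ⟶ SpecR R} {g : X₁ ⟶ X₂} {g' : X₂ ⟶ X₄} {h : X₁ ⟶ X₃}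
    {h' : X₃ ⟶ X₄} (wg : g ≫ f₂ = f₁) (wg' : g' ≫ f₄ = f₂) (wh : h ≫ f₃ = f₁)
    (wh' : h' ≫ f₄ = f₃) (hcomm : g ≫ g' = h ≫ h') :
    Pts.map g' wg' ∘ Pts.map g wg = Pts.map h' wh' ∘ Pts.map h wh :=
  funext fun s => Subtype.ext <| by simp only [Function.comp_apply, Pts.map, Category.assoc, hcomm]

lemma exists_map_ι_eq [IsLocalRing R] {X : Scheme} {f : X ⟶ SpecR R} (s : Pts f) (U : X.Opens)
    (hs : s.1 (IsLocalRing.closedPoint R) ∈ U) : ∃ t : Pts (U.ι ≫ f), Pts.map U.ι rfl t = s := by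
  have hrange : Set.range s.1 ⊆ Set.range U.ι := by
    rw [Scheme.Opens.range_ι]
    exact s.1.range_subset_of_closedPoint_mem U.isOpen hs
  refine ⟨⟨IsOpenImmersion.lift U.ι s.1 hrange, ?_⟩, Subtype.ext (IsOpenImmersion.lift_fac _ _ _)⟩
  rw [← Category.assoc, IsOpenImmersion.lift_fac, s.2]

end Pts

theorem statement_17_general (R : Type) [CommRing R] [TopologicalSpace R]
    [IsLocalRing R]
    (T : PointsTopology R)
    (haff : ∀ {X Y : Scheme} {f : X ⟶ SpecR R} {g : Y ⟶ SpecR R}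
      (hf : LocallyOfFiniteType f) (hg : LocallyOfFiniteType g),
      IsAffine X → IsAffine Y →
      ∀ (φ : X ⟶ Y) (w : φ ≫ g = f), IsEtale φ →
      letI := T.top f hf
      letI := T.top g hg
      IsOpenMap (Pts.map φ w)) :
    EtaleOpen T := by
  intro X Y f g hf hg φ w (hφ : Etale φ)
  let := T.top f hf
  let := T.top g hg
  refine isOpenMap_iff_nhds_le.mpr fun s => ?_
  obtain ⟨U, V, hU, hV, hsU, hUV⟩ :=
    φ.exists_isAffineOpen_mem_le_preimage (s.1 (IsLocalRing.closedPoint R))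
  obtain ⟨t, rfl⟩ := s.exists_map_ι_eq U hsU
  have wψ : φ.resLE V U hUV ≫ V.ι ≫ g = U.ι ≫ f := by
    rw [Scheme.Hom.resLE_comp_ι_assoc, w]
  let := T.top (U.ι ≫ f) inferInstance
  let := T.top (V.ι ≫ g) inferInstance
  exact nhds_le_map_nhds_of_comp_eq (T.continuous_map _ hf U.ι rfl)
    (T.openImmersion_isOpenEmbedding _ hg V.ι rfl inferInstance).isOpenMap
    (haff _ _ hU hV _ wψ (inferInstanceAs (Etale _)))
    (Pts.map_comp_map_of_comp_eq _ _ _ _ (φ.resLE_comp_ι hUV)) t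

/-- if every étale morphism between affine finite type `R`-schemes induces an
open map on `R`-points, then `R` is étale-open (étale morphisms of arbitrary locally of
finite type `R`-schemes induce open maps on `R`-points). -/
theorem statement_17 (R : Type) [CommRing R] [TopologicalSpace R] [IsTopologicalRing R]
    [IsLocalRing R]
    (hunit : IsOpen {x : R | IsUnit x})
    (hinv : ContinuousOn (fun x : R => Ring.inverse x) {x : R | IsUnit x})
    (T : PointsTopology R)
    (haff : ∀ {X Y : Scheme} {f : X ⟶ SpecR R} {g : Y ⟶ SpecR R}
      (hf : LocallyOfFiniteType f) (hg : LocallyOfFiniteType g),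
      IsAffine X → IsAffine Y →
      ∀ (φ : X ⟶ Y) (w : φ ≫ g = f), IsEtale φ →
      letI := T.top f hf
      letI := T.top g hg
      IsOpenMap (Pts.map φ w)) :
    EtaleOpen T :=
  statement_17_general R T haff

end
end
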